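/- Core networked dissipation inequality of Theorem 4: Let N, L, m be positive integers, Q an N × L real matrix (the incidence matrix of the network). For each node i ∈ {1,…,N} let y_i : ℝ → ℝ^m be differentiable and V_{pi} : ℝ → ℝ differentiable. For each edge l ∈ {1,…,L} let ε_l > 0, ζ_l : ℝ → ℝ^m differentiable, V_{cl} : ℝ → ℝ differentiable, and g_{l,1},…,g_{l,m} : ℝ → ℝ continuous. Define ŷ_l(t) = Σ_{i=1}^N Q_{il} y_i(t), y_{cl}(t) = ζ_l(t) + (g_{l,1}(ŷ_{l,1}(t)),…,g_{l,m}(ŷ_{l,m}(t))), and u_{pi}(t) = Σ_{l=1}^L Q_{il} y_{cl}(t). Assume for all t: V_{pi}'(t) ≤ ⟨u_{pi}(t), y_i'(t)⟩ for every node i (NI nodes) and V_{cl}'(t) ≤ ⟨ŷ_l(t), ζ_l'(t)⟩ − ε_l‖ζ_l'(t)‖² for every edge l (OSNI edges). Then, with ε_{c,min} = min_l ε_l > 0, the function Ŵ(t) = Σ_i V_{pi}(t) + Σ_l V_{cl}(t) − Σ_l ⟨ŷ_l(t), ζ_l(t)⟩ − Σ_l Σ_{k=1}^m ∫_0^{ŷ_{l,k}(t)}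 g_{l,k}(ξ) dξ is differentiable at every t and satisfies Ŵ'(t) ≤ −ε_{c,min} Σ_{l=1}^L ‖ζ_l'(t)‖² ≤ 0. -/

import Mathlib

/-!
Differentiating the storage, the cross terms cancel. On each edge the derivative of
`⟪ŷ, ζ⟫ + ∑ₖ ∫₀^{ŷₖ} gₖ` is `⟪ŷ, ζ'⟫ + ⟪y_c, ŷ'⟫`, and since `ŷ = Qᵀ y` and `u_p = Q y_c`,
`∑ₗ ⟪y_cₗ, ŷₗ'⟫ = ∑ᵢ ⟪u_pᵢ, yᵢ'⟫`. Hence `Ŵ'` is the sum of the node defects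
`V_pᵢ' - ⟪u_pᵢ, yᵢ'⟫ ≤ 0` and the edge defects `V_cₗ' - ⟪ŷₗ, ζₗ'⟫ ≤ -εₗ ‖ζₗ'‖²`.
-/

open scoped RealInnerProductSpace

theorem HasDerivAt.euclideanSpace_apply {ι : Type*} [Fintype ι]
    {f : ℝ → EuclideanSpace ℝ ι} {f' : EuclideanSpace ℝ ι} {t : ℝ}
    (hf : HasDerivAt f f' t) (k : ι) : HasDerivAt (fun s => f s k) (f' k) t :=
  (PiLp.proj 2 (fun _ : ι => ℝ) k).hasFDerivAt.comp_hasDerivAt t hf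

theorem HasDerivAt.intervalIntegral_comp {g : ℝ → ℝ} (hg : Continuous g) (a : ℝ)
    {f : ℝ → ℝ} {f' t : ℝ} (hf : HasDerivAt f f' t) :
    HasDerivAt (fun s => ∫ ξ in a..f s, g ξ) (g (f t) * f') t :=
  (hg.integral_hasStrictDerivAt a (f t)).hasDerivAt.comp t hf

theorem EuclideanSpace.inner_eq_sum_mul {ι : Type*} [Fintype ι] (x y : EuclideanSpace ℝ ι) :
    ⟪x, y⟫ = ∑ k, x k * y k := by
  simp [PiLp.inner_apply, mul_comm]

theorem sum_inner_sum_smul_comm {E : Type*} [NormedAddCommGroup E] [InnerProductSpace ℝ E]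
    {ι κ : Type*} [Fintype ι] [Fintype κ] (Q : Matrix ι κ ℝ) (a : ι → E) (b : κ → E) :
    ∑ l, ⟪b l, ∑ i, Q i l • a i⟫ = ∑ i, ⟪∑ l, Q i l • b l, a i⟫ := by
  simp only [sum_inner, inner_sum, real_inner_smul_left, real_inner_smul_right]
  exact Finset.sum_comm

theorem hasDerivAt_edgeStorage {ι : Type*} [Fintype ι] {g : ι → ℝ → ℝ}
    (hg : ∀ k, Continuous (g k)) {V : ℝ → ℝ} {yh ζ : ℝ → EuclideanSpace ℝ ι}
    {V' t : ℝ} {yh' ζ' yc : EuclideanSpace ℝ ι}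
    (hV : HasDerivAt V V' t) (hyh : HasDerivAt yh yh' t) (hζ : HasDerivAt ζ ζ' t)
    (hyc : ∀ k, yc k = ζ t k + g k (yh t k)) :
    HasDerivAt (fun s => V s - ⟪yh s, ζ s⟫ - ∑ k, ∫ ξ in (0:ℝ)..yh s k, g k ξ)
      (V' - ⟪yh t, ζ'⟫ - ⟪yc, yh'⟫) t := by
  refine ((hV.sub (hyh.inner ℝ hζ)).sub (HasDerivAt.fun_sum (u := .univ) fun k _ =>
    (hyh.euclideanSpace_apply k).intervalIntegral_comp (hg k) 0)).congr_deriv ?_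
  simp only [EuclideanSpace.inner_eq_sum_mul yc, EuclideanSpace.inner_eq_sum_mul yh', hyc,
    add_mul, Finset.sum_add_distrib, mul_comm (yh' _)]
  ring

theorem stmt_3_general (N L m : ℕ) (hL : 0 < L)
    (Q : Matrix (Fin N) (Fin L) ℝ)
    (y y' : Fin N → ℝ → EuclideanSpace ℝ (Fin m))
    (hy : ∀ i t, HasDerivAt (y i) (y' i t) t)
    (Vp Vp' : Fin N → ℝ → ℝ)
    (hVp : ∀ i t, HasDerivAt (Vp i) (Vp' i t) t)
    (ε : Fin L → ℝ) (hε : ∀ l, 0 < ε l)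
    (ζ ζ' : Fin L → ℝ → EuclideanSpace ℝ (Fin m))
    (hζ : ∀ l t, HasDerivAt (ζ l) (ζ' l t) t)
    (Vc Vc' : Fin L → ℝ → ℝ)
    (hVc : ∀ l t, HasDerivAt (Vc l) (Vc' l t) t)
    (g : Fin L → Fin m → ℝ → ℝ) (hg : ∀ l k, Continuous (g l k))
    (yhat : Fin L → ℝ → EuclideanSpace ℝ (Fin m))
    (hyhat : ∀ l t, yhat l t = ∑ i : Fin N, Q i l • y i t)
    (yc : Fin L → ℝ → EuclideanSpace ℝ (Fin m))
    (hyc : ∀ l t k, yc l t k = ζ l t k + g l k (yhat l t k))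
    (up : Fin N → ℝ → EuclideanSpace ℝ (Fin m))
    (hup : ∀ i t, up i t = ∑ l : Fin L, Q i l • yc l t)
    (hNI : ∀ i t, Vp' i t ≤ ⟪up i t, y' i t⟫)
    (hOSNI : ∀ l t, Vc' l t ≤ ⟪yhat l t, ζ' l t⟫ - ε l * ‖ζ' l t‖ ^ 2)
    (εcmin : ℝ)
    (hεcmin : εcmin = Finset.univ.inf' (Finset.univ_nonempty_iff.mpr ⟨⟨0, hL⟩⟩) ε) :
    0 < εcmin ∧
    ∀ t : ℝ, ∃ w : ℝ,
      HasDerivAt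
        (fun s => (∑ i : Fin N, Vp i s) + (∑ l : Fin L, Vc l s)
          - (∑ l : Fin L, ⟪yhat l s, ζ l s⟫)
          - ∑ l : Fin L, ∑ k : Fin m, ∫ ξ in (0:ℝ)..(yhat l s k), g l k ξ) w t ∧
      w ≤ -εcmin * ∑ l : Fin L, ‖ζ' l t‖ ^ 2 ∧
      -εcmin * ∑ l : Fin L, ‖ζ' l t‖ ^ 2 ≤ 0 := by
  have hεcmin_pos : 0 < εcmin := hεcmin ▸ (Finset.lt_inf'_iff _).2 fun l _ => hε l
  have hεcmin_le (l : Fin L) : εcmin ≤ ε l := hεcmin ▸ Finset.inf'_le _ (Finset.mem_univ l)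
  refine ⟨hεcmin_pos, fun t => ?_⟩
  have hyhat' (l : Fin L) : HasDerivAt (yhat l) (∑ i, Q i l • y' i t) t := by
    rw [funext (hyhat l)]
    exact HasDerivAt.fun_sum fun i _ => (hy i t).const_smul (Q i l)
  have hW := (HasDerivAt.fun_sum (u := .univ) fun i _ => hVp i t).add <|
    HasDerivAt.fun_sum (u := .univ) fun l _ =>
    hasDerivAt_edgeStorage (hg l) (hVc l t) (hyhat' l) (hζ l t) (hyc l t)
  have hedge (l : Fin L) : Vc' l t - ⟪yhat l t, ζ' l t⟫ ≤ -εcmin * ‖ζ' l t‖ ^ 2 := by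
    nlinarith [hOSNI l t, hεcmin_le l, sq_nonneg ‖ζ' l t‖]
  refine ⟨_, hW.congr_of_eventuallyEq (.of_forall fun s => by
    simp only [Pi.add_apply, Finset.sum_sub_distrib]; ring), ?_, ?_⟩
  · calc _ = ∑ i, (Vp' i t - ⟪up i t, y' i t⟫) + ∑ l, (Vc' l t - ⟪yhat l t, ζ' l t⟫) := by
          simp only [Finset.sum_sub_distrib, hup, ← sum_inner_sum_smul_comm Q (y' · t)]; ring
      _ ≤ ∑ i : Fin N, 0 + ∑ l, -εcmin * ‖ζ' l t‖ ^ 2 := by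
          gcongr with i _ l _
          · exact sub_nonpos.2 (hNI i t)
          · exact hedge l
      _ = -εcmin * ∑ l, ‖ζ' l t‖ ^ 2 := by simp [Finset.mul_sum]
  · exact mul_nonpos_of_nonpos_of_nonneg (neg_nonpos.2 hεcmin_pos.le)
      (Finset.sum_nonneg fun l _ => sq_nonneg _)

/-- Core networked dissipation inequality of Theorem 4:
NI node plants with OSNI edge controllers interconnected through the
incidence matrix `Q`. -/
theorem stmt_3 (N L m : ℕ) (hN : 0 < N) (hL : 0 < L) (hm : 0 < m)
    (Q : Matrix (Fin N) (Fin L) ℝ)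
    (y y' : Fin N → ℝ → EuclideanSpace ℝ (Fin m))
    (hy : ∀ i t, HasDerivAt (y i) (y' i t) t)
    (Vp Vp' : Fin N → ℝ → ℝ)
    (hVp : ∀ i t, HasDerivAt (Vp i) (Vp' i t) t)
    (ε : Fin L → ℝ) (hε : ∀ l, 0 < ε l)
    (ζ ζ' : Fin L → ℝ → EuclideanSpace ℝ (Fin m))
    (hζ : ∀ l t, HasDerivAt (ζ l) (ζ' l t) t)
    (Vc Vc' : Fin L → ℝ → ℝ)
    (hVc : ∀ l t, HasDerivAt (Vc l) (Vc' l t) t)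
    (g : Fin L → Fin m → ℝ → ℝ) (hg : ∀ l k, Continuous (g l k))
    (yhat : Fin L → ℝ → EuclideanSpace ℝ (Fin m))
    (hyhat : ∀ l t, yhat l t = ∑ i : Fin N, Q i l • y i t)
    (yc : Fin L → ℝ → EuclideanSpace ℝ (Fin m))
    (hyc : ∀ l t k, yc l t k = ζ l t k + g l k (yhat l t k))
    (up : Fin N → ℝ → EuclideanSpace ℝ (Fin m))
    (hup : ∀ i t, up i t = ∑ l : Fin L, Q i l • yc l t)
    (hNI : ∀ i t, Vp' i t ≤ ⟪up i t, y' i t⟫)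
    (hOSNI : ∀ l t, Vc' l t ≤ ⟪yhat l t, ζ' l t⟫ - ε l * ‖ζ' l t‖ ^ 2)
    (εcmin : ℝ)
    (hεcmin : εcmin = Finset.univ.inf' (Finset.univ_nonempty_iff.mpr ⟨⟨0, hL⟩⟩) ε) :
    0 < εcmin ∧
    ∀ t : ℝ, ∃ w : ℝ,
      HasDerivAt
        (fun s => (∑ i : Fin N, Vp i s) + (∑ l : Fin L, Vc l s)
          - (∑ l : Fin L, ⟪yhat l s, ζ l s⟫)
          - ∑ l : Fin L, ∑ k : Fin m, ∫ ξ in (0:ℝ)..(yhat l s k), g l k ξ) w t ∧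
      w ≤ -εcmin * ∑ l : Fin L, ‖ζ' l t‖ ^ 2 ∧
      -εcmin * ∑ l : Fin L, ‖ζ' l t‖ ^ 2 ≤ 0 :=
  stmt_3_general N L m hL Q y y' hy Vp Vp' hVp ε hε ζ ζ' hζ Vc Vc' hVc g hg yhat hyhat yc hyc up hup
    hNI hOSNI εcmin hεcmin
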